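/- arXiv:1602.06602 — 5 statements merged into one kernel-verified Lean document; each statement's English description precedes it below -/
import Mathlib

section
/- Let A be a nonzero m×n real matrix and suppose that k GE steps (1 ≤ k ≤ min(m,n)) are performed on A with every pivot being an absolute maximum entry, i.e., β_r = 1 for all 1 ≤ r ≤ k (complete pivoting without mistakes). Then the intermediate growth factor satisfies ρ_k(A) ≤ 4 · √k · k^{(1/4)·log k}. -/
open Finset Real

/-- One Gaussian elimination step on `A` with pivot position `(i, j)`:
`A_{st} - A_{sj} A_{it} / A_{ij}`. -/
noncomputable def geStep {m n : ℕ} (A : Matrix (Fin m) (Fin n) ℝ) (i : Fin m) (j : Fin n) :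
    Matrix (Fin m) (Fin n) ℝ :=
  Matrix.of fun s t => A s t - A s j * A i t / A i j

/-- The matrix `A^{(r)}` after `r` GE steps on `A`, where step `r` uses pivot
position `piv (r - 1)` (so `piv` is 0-indexed). -/
noncomputable def geIter {m n : ℕ} (A : Matrix (Fin m) (Fin n) ℝ)
    (piv : ℕ → Fin m × Fin n) : ℕ → Matrix (Fin m) (Fin n) ℝ
  | 0 => A
  | r + 1 => geStep (geIter A piv r) (piv r).1 (piv r).2

/-- Maximum absolute entry of a matrix. -/
noncomputable def maxAbs {m n : ℕ} (A : Matrix (Fin m) (Fin n) ℝ) : ℝ :=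
  ⨆ s, ⨆ t, |A s t|

/-- The magnitude `p_r = |A^{(r-1)}_{i_r j_r}|` of the `r`-th pivot (1-indexed `r`). -/
noncomputable def pivMag {m n : ℕ} (A : Matrix (Fin m) (Fin n) ℝ)
    (piv : ℕ → Fin m × Fin n) (r : ℕ) : ℝ :=
  |geIter A piv (r - 1) (piv (r - 1)).1 (piv (r - 1)).2|

/-!
Wilkinson's argument. Let `p_q` be the `q`-th pivot. An elimination step replaces the remaining
pivot rows and columns by a Schur complement, so the minor of `A^{(q-1)}` on the pivot rows and
columns of steps `q, …, q+L-1` has determinant `p_q ⋯ p_{q+L-1}`. Under complete pivoting its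
entries are bounded by `|p_q|`, and Hadamard's inequality gives
`∑_{i<L} log |p_{q+i}| ≤ L log |p_q| + (L/2) log L`. Solving these inequalities backwards from
the last pivot yields `log |p_k| ≤ log |p_1| + (1/2) log k + (1/2) ∑_{j=2}^k log j / (j - 1)`,
and the sum is at most `(log k)² / 2 + 2 log 2`. The final step at most doubles the largest
entry, which accounts for the remaining factor `2`.
-/

section MaxAbs

variable {m n : ℕ} (A : Matrix (Fin m) (Fin n) ℝ)

lemma abs_le_maxAbs (s : Fin m) (t : Fin n) : |A s t| ≤ maxAbs A :=
  (le_ciSup (Set.finite_range _).bddAbove t).trans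
    (le_ciSup (f := fun s => ⨆ t, |A s t|) (Set.finite_range _).bddAbove s)

lemma maxAbs_le {B : ℝ} (hB : 0 ≤ B) (h : ∀ s t, |A s t| ≤ B) : maxAbs A ≤ B :=
  Real.iSup_le (fun s => Real.iSup_le (h s) hB) hB

lemma maxAbs_geStep_le {i : Fin m} {j : Fin n} (hmax : ∀ s t, |A s t| ≤ |A i j|) :
    maxAbs (geStep A i j) ≤ 2 * |A i j| := by
  refine maxAbs_le _ (by positivity) fun s t => ?_
  have hmul : |A s j * A i t / A i j| ≤ |A i j| := by
    rcases eq_or_ne (A i j) 0 with h0 | h0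
    · simp [h0]
    rw [abs_div, abs_mul, div_le_iff₀ (abs_pos.2 h0)]
    exact mul_le_mul (hmax s j) (hmax i t) (abs_nonneg _) (abs_nonneg _)
  calc |geStep A i j s t| ≤ |A s t| + |A s j * A i t / A i j| := abs_sub _ _
    _ ≤ 2 * |A i j| := by linarith [hmax s t]

end MaxAbs

lemma det_eq_mul_det_geStep_submatrix {L : ℕ} (M : Matrix (Fin (L + 1)) (Fin (L + 1)) ℝ)
    (h : M 0 0 ≠ 0) :
    M.det = M 0 0 * ((geStep M 0 0).submatrix Fin.succ Fin.succ).det := by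
  set N := (geStep M 0 0).updateRow 0 (M 0)
  have hM : M.det = N.det := by
    refine Matrix.det_eq_of_forall_row_eq_smul_add_const
      (fun s => if s = 0 then 0 else M s 0 / M 0 0) 0 (by simp) fun s t => ?_
    rcases eq_or_ne s 0 with rfl | hs
    · simp [N]
    · simp only [N, Matrix.updateRow_ne hs, Matrix.updateRow_self, geStep, Matrix.of_apply,
        if_neg hs]
      field_simp
      ring
  have hcol : ∀ s : Fin L, N s.succ 0 = 0 := fun s => by
    simp [N, geStep, Fin.succ_ne_zero, h]
  have hminor : N.submatrix Fin.succ Fin.succ = (geStep M 0 0).submatrix Fin.succ Fin.succ := by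
    ext a b
    simp [N, Fin.succ_ne_zero]
  rw [hM, Matrix.det_succ_column_zero, Fin.sum_univ_succ]
  simp [hcol, N, hminor]

lemma prod_le_mean_pow {ι : Type*} [Fintype ι] (z : ι → ℝ) (hz : ∀ i, 0 ≤ z i) :
    ∏ i, z i ≤ ((∑ i, z i) / Fintype.card ι) ^ Fintype.card ι := by
  set N := Fintype.card ι
  rcases Nat.eq_zero_or_pos N with hN | hN
  · simp [Finset.univ_eq_empty_iff.2 (Fintype.card_eq_zero_iff.1 hN), hN]
  have hN' : (0 : ℝ) < N := by exact_mod_cast hN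
  have hprod : 0 ≤ ∏ i, z i := prod_nonneg fun i _ => hz i
  have amgm := Real.geom_mean_le_arith_mean_weighted univ (fun _ => 1 / (N : ℝ)) z
    (fun _ _ => by positivity) (by simp [N, hN'.ne']) fun i _ => hz i
  rw [Real.finsetProd_rpow _ _ fun i _ => hz i, ← mul_sum, one_div_mul_eq_div] at amgm
  calc ∏ i, z i = ((∏ i, z i) ^ (1 / (N : ℝ))) ^ N := by
        rw [← Real.rpow_natCast, ← Real.rpow_mul hprod, one_div_mul_cancel hN'.ne',
          Real.rpow_one]
    _ ≤ ((∑ i, z i) / N) ^ N := by gcongr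

lemma abs_det_le_of_abs_le {ι : Type*} [Fintype ι] [DecidableEq ι] (M : Matrix ι ι ℝ)
    {B : ℝ} (h : ∀ i j, |M i j| ≤ B) :
    |M.det| ≤ (√(Fintype.card ι) * B) ^ Fintype.card ι := by
  rcases isEmpty_or_nonempty ι with hι | hι
  · simp
  set N := Fintype.card ι
  have hN : (0 : ℝ) < N := by exact_mod_cast Fintype.card_pos
  have hB : 0 ≤ B := (abs_nonneg _).trans (h hι.some hι.some)
  have hG := Matrix.isHermitian_conjTranspose_mul_self M
  have hev : ∀ i, 0 ≤ hG.eigenvalues i :=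
    (Matrix.posSemidef_conjTranspose_mul_self M).eigenvalues_nonneg
  have hdet : M.det ^ 2 = ∏ i, hG.eigenvalues i := by
    rw [sq, ← Matrix.det_transpose, ← Matrix.det_mul]
    simpa using hG.det_eq_prod_eigenvalues
  have htrace : ∑ i, hG.eigenvalues i ≤ N * (N * B ^ 2) := by
    have htr : (M.conjTranspose * M).trace = ∑ i, ∑ j, M j i ^ 2 := by
      simp [Matrix.trace, Matrix.mul_apply, sq]
    have hentry : ∀ i j, M j i ^ 2 ≤ B ^ 2 := fun i j => by
      simpa only [sq_abs] using pow_le_pow_left₀ (abs_nonneg _) (h j i) 2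
    have := hG.trace_eq_sum_eigenvalues
    simp only [RCLike.ofReal_real_eq_id, id_eq] at this
    rw [← this, htr]
    calc ∑ i, ∑ j, M j i ^ 2 ≤ ∑ _i : ι, ∑ _j : ι, B ^ 2 :=
          sum_le_sum fun i _ => sum_le_sum fun j _ => hentry i j
      _ = N * (N * B ^ 2) := by simp [N]
  have hsq : M.det ^ 2 ≤ ((√N * B) ^ N) ^ 2 := by
    rw [hdet, ← pow_mul, mul_comm N, pow_mul, mul_pow, Real.sq_sqrt hN.le]
    refine (prod_le_mean_pow _ hev).trans (pow_le_pow_left₀ ?_ ?_ N)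
    · exact div_nonneg (sum_nonneg fun i _ => hev i) hN.le
    · rwa [div_le_iff₀ hN, mul_comm]
  exact abs_le_of_sq_le_sq hsq (by positivity)

section Pivots

variable {m n : ℕ} (A : Matrix (Fin m) (Fin n) ℝ) (piv : ℕ → Fin m × Fin n)

/-- Zero-indexed: `pivot A piv r` is the pivot `p_{r+1}` of step `r + 1`. -/
noncomputable def pivot (r : ℕ) : ℝ :=
  geIter A piv r (piv r).1 (piv r).2

noncomputable def pivotMinor (q L : ℕ) : Matrix (Fin L) (Fin L) ℝ :=
  Matrix.of fun a b => geIter A piv q (piv (q + a)).1 (piv (q + b)).2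

lemma geStep_pivotMinor_submatrix (q L : ℕ) :
    (geStep (pivotMinor A piv q (L + 1)) 0 0).submatrix Fin.succ Fin.succ =
      pivotMinor A piv (q + 1) L := by
  ext a b
  simp [pivotMinor, geStep, geIter, ← add_assoc, add_right_comm q 1]

lemma det_pivotMinor (L q : ℕ) (hpiv : ∀ i < L, pivot A piv (q + i) ≠ 0) :
    (pivotMinor A piv q L).det = ∏ i ∈ range L, pivot A piv (q + i) := by
  induction L generalizing q with
  | zero => simp
  | succ L ih =>
    have h00 : pivotMinor A piv q (L + 1) 0 0 = pivot A piv q := rfl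
    rw [det_eq_mul_det_geStep_submatrix _ (h00 ▸ hpiv 0 L.succ_pos), geStep_pivotMinor_submatrix,
      ih (q + 1) fun i hi => by simpa [add_assoc, add_comm 1] using hpiv (i + 1) (by omega),
      prod_range_succ', h00, mul_comm]
    simp [add_assoc, add_comm 1]

lemma sum_log_abs_pivot_le {q L : ℕ} (hpiv : ∀ i < L, pivot A piv (q + i) ≠ 0)
    (hmax : ∀ s t, |geIter A piv q s t| ≤ |pivot A piv q|) :
    ∑ i ∈ range L, log |pivot A piv (q + i)| ≤ L * log |pivot A piv q| + L / 2 * log L := by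
  rcases Nat.eq_zero_or_pos L with rfl | hL
  · simp
  have hq : 0 < |pivot A piv q| := abs_pos.2 (by simpa using hpiv 0 hL)
  have hdet := abs_det_le_of_abs_le (pivotMinor A piv q L) fun a b => hmax _ _
  rw [det_pivotMinor A piv L q hpiv, abs_prod, Fintype.card_fin] at hdet
  have hlog := Real.log_le_log (prod_pos fun i hi => abs_pos.2 (hpiv i (mem_range.1 hi))) hdet
  rw [Real.log_prod fun i hi => (abs_pos.2 (hpiv i (mem_range.1 hi))).ne', Real.log_pow,
    Real.log_mul (by positivity) hq.ne', Real.log_sqrt L.cast_nonneg] at hlog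
  linarith

end Pivots

/-- The logarithm of Wilkinson's product `2 ⋅ 3^{1/2} ⋅ 4^{1/3} ⋯ k^{1/(k-1)}`. -/
noncomputable def wilkinsonSum (k : ℕ) : ℝ :=
  ∑ j ∈ Ico 2 (k + 1), log j / (j - 1)

lemma wilkinsonSum_succ {k : ℕ} (hk : 1 ≤ k) :
    wilkinsonSum (k + 1) = wilkinsonSum k + log (k + 1) / k := by
  rw [wilkinsonSum, sum_Ico_succ_top (by omega), wilkinsonSum]
  push_cast
  ring

lemma log_succ_div_sub_sq_log_le {x : ℝ} (hx : 1 < x) :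
    log (x + 1) / x - (log (x + 1) ^ 2 - log x ^ 2) / 2 ≤
      (2 + log x) / (2 * (x - 1)) - (2 + log (x + 1)) / (2 * x) := by
  have hx0 : 0 < x := by linarith
  have hu : log (x + 1) - log x = log (1 + 1 / x) := by
    rw [← Real.log_div (by linarith) hx0.ne']
    congr 1
    field_simp
  have hu_le : log (x + 1) - log x ≤ 1 / x := by
    rw [hu]
    linarith [Real.log_le_sub_one_of_pos (show 0 < 1 + 1 / x by positivity)]
  have hu_ge : 2 / (2 * x + 1) ≤ log (x + 1) - log x := by
    rw [hu]
    convert Real.le_log_one_add_of_nonneg (show 0 ≤ 1 / x by positivity) using 1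
    field_simp
    ring
  have hb : 0 ≤ log (x + 1) := Real.log_nonneg (by linarith)
  generalize log (x + 1) = b at *
  generalize hu' : b - log x = u at *
  rw [show log x = b - u by linarith]
  have hu0 : 0 ≤ u := le_trans (by positivity) hu_ge
  have hxu : x * u ≤ 1 := by rwa [le_div_iff₀ hx0, mul_comm] at hu_le
  have hgap : 1 / x - u ≤ 1 / (2 * x ^ 2) := by
    have : 1 / x - 2 / (2 * x + 1) ≤ 1 / (2 * x ^ 2) := by
      rw [div_sub_div _ _ hx0.ne' (by positivity),
        div_le_div_iff₀ (by positivity) (by positivity)]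
      nlinarith
    linarith
  have hsq : u ^ 2 ≤ 1 / x ^ 2 := by
    simpa [div_pow] using pow_le_pow_left₀ hu0 hu_le 2
  calc b / x - (b ^ 2 - (b - u) ^ 2) / 2 = b * (1 / x - u) + u ^ 2 / 2 := by ring
    _ ≤ b * (1 / (2 * x ^ 2)) + 1 / x ^ 2 / 2 := by gcongr
    _ = (1 + b) / (2 * x ^ 2) := by ring
    _ ≤ (1 + b) / (2 * x * (x - 1)) :=
        div_le_div_of_nonneg_left (by linarith) (by nlinarith) (by nlinarith)
    _ ≤ (2 + b - x * u) / (2 * x * (x - 1)) := by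
        gcongr
        linarith
    _ = (2 + (b - u)) / (2 * (x - 1)) - (2 + b) / (2 * x) := by
        field_simp [show x - 1 ≠ 0 by linarith]
        ring

lemma log_three_le : log 3 ≤ log 2 + 1 / 2 := by
  have := Real.log_le_sub_one_of_pos (show (0 : ℝ) < 3 / 2 by norm_num)
  rw [Real.log_div (by norm_num) (by norm_num)] at this
  linarith

/-- The correction term dominates the remaining increments of `wilkinsonSum k - (log k)² / 2`
(`log_succ_div_sub_sq_log_le`), which makes the bound inductive. -/
lemma wilkinsonSum_add_le {k : ℕ} (hk : 4 ≤ k) :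
    wilkinsonSum k + (2 + log k) / (2 * (k - 1)) ≤ log k ^ 2 / 2 + 2 * log 2 := by
  induction k, hk using Nat.le_induction with
  | base =>
    have h4 : log 4 = 2 * log 2 := by
      rw [show (4 : ℝ) = 2 ^ 2 by norm_num, Real.log_pow]
      norm_num
    norm_num [wilkinsonSum, sum_Ico_succ_top, h4]
    nlinarith [Real.log_two_gt_d9, log_three_le]
  | succ k hk ih =>
    have hstep := log_succ_div_sub_sq_log_le (x := k) (by exact_mod_cast (by omega : 1 < k))
    rw [wilkinsonSum_succ (by omega)]
    push_cast
    rw [add_sub_cancel_right]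
    linarith

lemma wilkinsonSum_le (k : ℕ) : wilkinsonSum k ≤ log k ^ 2 / 2 + 2 * log 2 := by
  rcases le_or_gt 4 k with hk | hk
  · have hk' : (4 : ℝ) ≤ k := by exact_mod_cast hk
    have : 0 ≤ (2 + log k) / (2 * (k - 1)) :=
      div_nonneg (by linarith [Real.log_natCast_nonneg k]) (by linarith)
    linarith [wilkinsonSum_add_le hk]
  · interval_cases k <;> norm_num [wilkinsonSum, sum_Ico_succ_top] <;>
      nlinarith [Real.log_two_gt_d9, log_three_le]

lemma le_add_wilkinsonSum_of_sum_le (y : ℕ → ℝ) {k : ℕ} (hk : 1 ≤ k)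
    (h : ∀ L, 1 ≤ L → L ≤ k →
      ∑ i ∈ range L, y (k - L + i) ≤ L * y (k - L) + L / 2 * log L) :
    y (k - 1) ≤ y 0 + log k / 2 + wilkinsonSum k / 2 := by
  set S : ℕ → ℝ := fun L => ∑ i ∈ range L, y (k - L + i) with hS
  have hS_succ : ∀ L < k, S (L + 1) = y (k - (L + 1)) + S L := fun L hL => by
    simp only [hS, sum_range_succ', add_zero, add_comm (y _)]
    exact congrArg₂ _ (sum_congr rfl fun i _ => by congr 1; omega) rfl
  have hmean : ∀ L, 1 ≤ L → L ≤ k → y (k - 1) ≤ S L / L + wilkinsonSum L / 2 := by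
    intro L hL
    induction L, hL using Nat.le_induction with
    | base => simp [hS, wilkinsonSum]
    | succ L hL ih =>
      intro hLk
      have hL' : (1 : ℝ) ≤ L := by exact_mod_cast hL
      have hsum : S (L + 1) ≤
          (L + 1 : ℕ) * y (k - (L + 1)) + (L + 1 : ℕ) / 2 * log (L + 1 : ℕ) :=
        h (L + 1) (by omega) hLk
      rw [hS_succ L (by omega)] at hsum
      push_cast at hsum ⊢
      have hdiv : S L / L ≤ S (L + 1) / (L + 1) + log (L + 1) / L / 2 := by
        rw [hS_succ L (by omega), div_div, div_add_div _ _ (by positivity) (by positivity),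
          div_le_div_iff₀ (by positivity) (by positivity)]
        nlinarith
      rw [wilkinsonSum_succ hL]
      linarith [ih (by omega)]
  have hlast : S k ≤ k * y 0 + k / 2 * log k := by simpa [hS] using h k hk le_rfl
  have hk' : (0 : ℝ) < k := by exact_mod_cast hk
  have : S k / k ≤ y 0 + log k / 2 := by
    rw [div_le_iff₀ hk']
    linarith
  linarith [hmean k hk le_rfl]

lemma exp_wilkinson_le {k : ℕ} (hk : 1 ≤ k) :
    exp (log k / 2 + wilkinsonSum k / 2) ≤ 2 * √k * (k : ℝ) ^ ((1 / 4 : ℝ) * log k) := by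
  have hk' : (0 : ℝ) < k := by exact_mod_cast hk
  have hrhs : 2 * √k * (k : ℝ) ^ ((1 / 4 : ℝ) * log k) =
      exp (log 2 + log k / 2 + log k * ((1 / 4 : ℝ) * log k)) := by
    rw [exp_add, exp_add, exp_log two_pos, ← Real.log_sqrt hk'.le, exp_log (by positivity),
      Real.rpow_def_of_pos hk']
  rw [hrhs, exp_le_exp]
  linarith [wilkinsonSum_le k]

theorem ge_growth_complete_pivoting_no_mistakes_general
    (m n k : ℕ) (A : Matrix (Fin m) (Fin n) ℝ)
    (hk : 1 ≤ k)
    (piv : ℕ → Fin m × Fin n)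
    (hpiv : ∀ r < k, geIter A piv r (piv r).1 (piv r).2 ≠ 0)
    (hmax : ∀ r, 1 ≤ r → r ≤ k → pivMag A piv r = maxAbs (geIter A piv (r - 1))) :
    maxAbs (geIter A piv k) / maxAbs A ≤
      4 * Real.sqrt k * (k : ℝ) ^ ((1 / 4 : ℝ) * Real.log k) := by
  have hmaxAbs : ∀ q < k, maxAbs (geIter A piv q) = |pivot A piv q| := fun q hq => by
    simpa [pivMag, pivot] using (hmax (q + 1) (by omega) (by omega)).symm
  have hcomplete : ∀ q < k, ∀ s t, |geIter A piv q s t| ≤ |pivot A piv q| := fun q hq s t =>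
    hmaxAbs q hq ▸ abs_le_maxAbs _ s t
  have hpos : ∀ q < k, 0 < |pivot A piv q| := fun q hq => abs_pos.2 (hpiv q hq)
  have hlog := le_add_wilkinsonSum_of_sum_le (fun i => log |pivot A piv i|) hk fun L hL hLk =>
    sum_log_abs_pivot_le A piv (fun i hi => hpiv _ (by omega)) (hcomplete _ (by omega))
  have hlast :
      |pivot A piv (k - 1)| ≤ |pivot A piv 0| * (2 * √k * k ^ ((1 / 4 : ℝ) * log k)) := by
    calc |pivot A piv (k - 1)| = exp (log |pivot A piv (k - 1)|) :=
          (exp_log (hpos _ (by omega))).symm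
      _ ≤ exp (log |pivot A piv 0| + (log k / 2 + wilkinsonSum k / 2)) := by
          gcongr
          linarith
      _ ≤ _ := by
          rw [exp_add, exp_log (hpos 0 hk)]
          gcongr
          exact exp_wilkinson_le hk
  have hfinal : maxAbs (geIter A piv k) ≤ 2 * |pivot A piv (k - 1)| := by
    obtain ⟨j, rfl⟩ : ∃ j, k = j + 1 := ⟨k - 1, by omega⟩
    exact maxAbs_geStep_le _ (hcomplete j (by omega))
  rw [div_le_iff₀ (hmaxAbs 0 hk ▸ hpos 0 hk), show maxAbs A = |pivot A piv 0| from hmaxAbs 0 hk]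
  linarith

/-- **GE with complete pivoting, no mistakes.** If every pivot is an absolute maximum
entry of the current matrix (`β_r = 1` for all `r`), then
`ρ_k(A) ≤ 4 √k k^{(1/4) log k}`. -/
theorem ge_growth_complete_pivoting_no_mistakes
    (m n k : ℕ) (A : Matrix (Fin m) (Fin n) ℝ) (hA : A ≠ 0)
    (hk : 1 ≤ k) (hkmn : k ≤ min m n)
    (piv : ℕ → Fin m × Fin n)
    (hpiv : ∀ r < k, geIter A piv r (piv r).1 (piv r).2 ≠ 0)
    (hmax : ∀ r, 1 ≤ r → r ≤ k → pivMag A piv r = maxAbs (geIter A piv (r - 1))) :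
    maxAbs (geIter A piv k) / maxAbs A ≤
      4 * Real.sqrt k * (k : ℝ) ^ ((1 / 4 : ℝ) * Real.log k) :=
  ge_growth_complete_pivoting_no_mistakes_general m n k A hk piv hpiv hmax
end

section
/- Let A be an m×n real matrix on which k GE steps are performed with pivot positions (i_1,j_1),…,(i_k,j_k), where i_1,…,i_k are distinct rows and j_1,…,j_k are distinct columns. For 0 ≤ r ≤ k−1 let B^{(r)} be the (k−r)×(k−r) matrix with entries (B^{(r)})_{st} = A^{(r)}_{i_s j_t} for r+1 ≤ s,t ≤ k, and let p_i = |A^{(i-1)}_{i_i j_i}| be the pivot magnitudes. Then the absolute value of the determinant of B^{(r)} equals the product of the remaining pivot magnitudes: |det(B^{(r)})| = ∏_{i=r+1}^{k} p_i, for every 0 ≤ r ≤ k−1. -/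
open Finset Real

/-
A single elimination step with a nonzero pivot `M₀₀` subtracts multiples of the pivot row from the
other rows, which leaves the determinant unchanged and clears the pivot column; expanding along
that column gives `det M = M₀₀ · det S`, where `S` is the Schur complement of the pivot. Restricted
to the remaining pivot rows and columns, `S` is exactly the pivot submatrix one step later, so by
induction `det B^{(r)}` is the product of the signed pivots from step `r` on.
-/

theorem Matrix.det_eq_mul_det_schur {K : Type*} [Field K] {d : ℕ}
    (M : Matrix (Fin (d + 1)) (Fin (d + 1)) K) (h : M 0 0 ≠ 0) :
    M.det = M 0 0 *
      (Matrix.of fun s t : Fin d => M s.succ t.succ - M s.succ 0 * M 0 t.succ / M 0 0).det := by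
  set c : Fin (d + 1) → K := fun s => if s = 0 then 0 else M s 0 / M 0 0
  set B : Matrix (Fin (d + 1)) (Fin (d + 1)) K := Matrix.of fun s t => M s t - c s * M 0 t
  have hB_row_zero : ∀ t, B 0 t = M 0 t := by simp [B, c]
  have hB_col_zero : ∀ s, s ≠ 0 → B s 0 = 0 := by
    intro s hs
    simp only [B, c, Matrix.of_apply, if_neg hs]
    field_simp
    ring
  have hMB : M.det = B.det :=
    Matrix.det_eq_of_forall_row_eq_smul_add_const c 0 (by simp [c]) fun s t => by
      rw [hB_row_zero]; simp [B]
  rw [hMB, Matrix.det_succ_column_zero, Finset.sum_eq_single 0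
    (fun s _ hs => by rw [hB_col_zero s hs, mul_zero, zero_mul]) (by simp)]
  rw [hB_row_zero]
  simp only [Fin.val_zero, pow_zero, one_mul, Fin.succAbove_zero]
  congr 2
  ext s t
  simp [B, c, mul_div_right_comm]

theorem det_submatrix_eq_mul_det_submatrix_geStep {m n d : ℕ} (A : Matrix (Fin m) (Fin n) ℝ)
    (f : Fin (d + 1) → Fin m) (g : Fin (d + 1) → Fin n) (h : A (f 0) (g 0) ≠ 0) :
    (A.submatrix f g).det =
      A (f 0) (g 0) * ((geStep A (f 0) (g 0)).submatrix (f ∘ Fin.succ) (g ∘ Fin.succ)).det :=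
  Matrix.det_eq_mul_det_schur (A.submatrix f g) h

theorem det_submatrix_geIter_eq_prod_pivots {m n : ℕ} (A : Matrix (Fin m) (Fin n) ℝ)
    (piv : ℕ → Fin m × Fin n) (d r : ℕ)
    (hpiv : ∀ i ∈ Ico r (r + d), geIter A piv i (piv i).1 (piv i).2 ≠ 0) :
    ((geIter A piv r).submatrix (fun s : Fin d => (piv (r + s)).1)
        (fun t : Fin d => (piv (r + t)).2)).det =
      ∏ i ∈ Ico r (r + d), geIter A piv i (piv i).1 (piv i).2 := by
  induction d generalizing r with
  | zero => simp
  | succ d ih =>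
    have hshift : ∀ s : Fin d, r + ((s.succ : Fin (d + 1)) : ℕ) = r + 1 + s := by
      intro s; simp only [Fin.val_succ]; ring
    have hrest := ih (r + 1) fun i hi => hpiv i (by simp only [mem_Ico] at hi ⊢; omega)
    rw [det_submatrix_eq_mul_det_submatrix_geStep _ _ _ (by simpa using hpiv r (by simp)),
      Finset.prod_eq_prod_Ico_succ_bot (by omega), show r + (d + 1) = r + 1 + d by ring, ← hrest]
    simp only [Fin.val_zero, add_zero, Function.comp_def, hshift, geIter]

theorem det_pivot_submatrix_eq_prod_pivots_general
    (m n k : ℕ) (A : Matrix (Fin m) (Fin n) ℝ)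
    (piv : ℕ → Fin m × Fin n)
    (hpiv : ∀ r < k, geIter A piv r (piv r).1 (piv r).2 ≠ 0) :
    ∀ r < k,
      |(Matrix.of fun s t : Fin (k - r) =>
          geIter A piv r (piv (r + (s : ℕ))).1 (piv (r + (t : ℕ))).2).det| =
        ∏ i ∈ Finset.Ico r k, |geIter A piv i (piv i).1 (piv i).2| := by
  intro r hr
  have hdet := det_submatrix_geIter_eq_prod_pivots A piv (k - r) r
    fun i hi => hpiv i (by simp only [mem_Ico] at hi; omega)
  rw [Nat.add_sub_cancel' hr.le] at hdet
  rw [← Finset.abs_prod, ← hdet]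
  rfl

/-- **Determinant of the pivot submatrix.** Let `B^{(r)}` be the `(k-r) × (k-r)` matrix
with entries `A^{(r)}_{i_s j_t}` for `r+1 ≤ s, t ≤ k` (here 0-indexed: rows
`piv r, …, piv (k-1)`). Then `|det B^{(r)}| = ∏_{i=r+1}^k p_i`, the product of the
remaining pivot magnitudes. -/
theorem det_pivot_submatrix_eq_prod_pivots
    (m n k : ℕ) (A : Matrix (Fin m) (Fin n) ℝ)
    (hk : 1 ≤ k)
    (piv : ℕ → Fin m × Fin n)
    (hpiv : ∀ r < k, geIter A piv r (piv r).1 (piv r).2 ≠ 0)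
    (hrows : ∀ r < k, ∀ s < k, (piv r).1 = (piv s).1 → r = s)
    (hcols : ∀ r < k, ∀ s < k, (piv r).2 = (piv s).2 → r = s) :
    ∀ r < k,
      |(Matrix.of fun s t : Fin (k - r) =>
          geIter A piv r (piv (r + (s : ℕ))).1 (piv (r + (t : ℕ))).2).det| =
        ∏ i ∈ Finset.Ico r k, |geIter A piv i (piv i).1 (piv i).2| :=
  det_pivot_submatrix_eq_prod_pivots_general m n k A piv hpiv
end

section
/- Let k ≥ 3, let q_1,…,q_k be real numbers, and let β_1,…,β_{k−1} ∈ (0,1]. Suppose that (i) for every 1 ≤ r ≤ k−2, ∑_{i=r+2}^{k} q_i ≤ ((k−r)/2)·log(k−r) − (k−r)·log β_{r+1} + (k−r−1)·q_{r+1}, and (ii) ∑_{i=1}^{k} q_i ≤ (k/2)·log k − k·log β_1 + k·q_1. Then q_k − q_1 ≤ log f(k) + (1/2)·log k − 2·log β_1 − ∑_{r=1}^{k−2} (log β_{r+1})/(k−r−1), where f(k) = (∏_{r=2}^{k} r^{1/(r−1)})^{1/2}. -/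
open Finset Real

/-! The bound follows by telescoping the averages `A j` of `q` over `{j, …, k}`. Hypothesis (i) at
`r = j - 1` (and (ii) for `j = 1`) says exactly that `A (j + 1) ≤ A j + c j / (k - j)`, where
`c j = log (k + 1 - j) / 2 - log β j`, while (ii) also gives `A 1 ≤ q 1 + c 1`; since `A k = q k`,
`q k - q 1 ≤ c 1 + ∑ j, c j / (k - j)`. Reflecting `j ↦ k + 1 - j` turns the `log` part of the sum
into `log f(k)`, and `β 1 ≤ 1` absorbs `-(1 + 1 / (k - 1)) log β 1` into `-2 log β 1`. -/

lemma sum_Ico_one_comp_reflect (g : ℝ → ℝ) (k : ℕ) :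
    ∑ j ∈ Ico 1 k, g ((k : ℝ) + 1 - j) = ∑ s ∈ Icc 2 k, g s := by
  have h := sum_Ico_reflect (fun s : ℕ => g s) 1 (n := k + 1) (by omega : k ≤ k + 1 + 1)
  rw [show k + 1 + 1 - k = 2 by omega, Nat.add_sub_cancel, Ico_add_one_right_eq_Icc] at h
  rw [← h]
  refine sum_congr rfl fun j hj => ?_
  rw [Nat.cast_sub (by simp only [mem_Ico] at hj; omega), Nat.cast_add, Nat.cast_one]

lemma sum_Ico_one_eq_add_sum_Icc {M : Type*} [AddCommMonoid M] (g : ℕ → M) {k : ℕ} (hk : 2 ≤ k) :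
    ∑ j ∈ Ico 1 k, g j = g 1 + ∑ r ∈ Icc 1 (k - 2), g (r + 1) := by
  rw [sum_eq_sum_Ico_succ_bot (by omega), ← Ico_add_one_right_eq_Icc, sum_Ico_add',
    show k - 2 + 1 + 1 = k by omega]

lemma log_prod_rpow_inv_sub_one_rpow_half (k : ℕ) :
    log ((∏ r ∈ Icc 2 k, (r : ℝ) ^ (((r : ℝ) - 1)⁻¹)) ^ ((1 : ℝ) / 2)) =
      (∑ r ∈ Icc 2 k, log r / ((r : ℝ) - 1)) / 2 := by
  have hpos : ∀ r ∈ Icc 2 k, 0 < (r : ℝ) := fun r hr => by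
    have : (2 : ℝ) ≤ r := by exact_mod_cast (mem_Icc.1 hr).1
    linarith
  rw [log_rpow (prod_pos fun r hr => rpow_pos_of_pos (hpos r hr) _),
    log_prod fun r hr => (rpow_pos_of_pos (hpos r hr) _).ne', one_div_mul_eq_div]
  congr 1
  exact sum_congr rfl fun r hr => by rw [log_rpow (hpos r hr), inv_mul_eq_div]

noncomputable def tailAverage (q : ℕ → ℝ) (k j : ℕ) : ℝ :=
  (∑ i ∈ Icc j k, q i) / ((k : ℝ) + 1 - j)

section TailAverage

variable (q : ℕ → ℝ) {k j : ℕ}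

lemma tailAverage_self : tailAverage q k k = q k := by simp [tailAverage]

lemma sum_Icc_eq_add_sum_Icc_succ (hjk : j ≤ k) :
    ∑ i ∈ Icc j k, q i = q j + ∑ i ∈ Icc (j + 1) k, q i := by
  rw [← insert_Icc_add_one_left_eq_Icc hjk, sum_insert (by simp)]

lemma tailAverage_le_of_sum_le {c : ℝ} (hjk : j ≤ k)
    (h : ∑ i ∈ Icc j k, q i ≤ ((k : ℝ) + 1 - j) * c) : tailAverage q k j ≤ c := by
  have hj : (j : ℝ) ≤ k := by exact_mod_cast hjk
  rw [tailAverage, div_le_iff₀ (by linarith)]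
  linarith

lemma tailAverage_succ_le {c : ℝ} (hjk : j < k)
    (h : ∑ i ∈ Icc (j + 1) k, q i ≤ ((k : ℝ) + 1 - j) * c + ((k : ℝ) - j) * q j) :
    tailAverage q k (j + 1) ≤ tailAverage q k j + c / ((k : ℝ) - j) := by
  have hn : (0 : ℝ) < k - j := sub_pos.2 (by exact_mod_cast hjk)
  rw [tailAverage, tailAverage, sum_Icc_eq_add_sum_Icc_succ q hjk.le, Nat.cast_add, Nat.cast_one,
    show (k : ℝ) + 1 - (j + 1) = k - j by ring, div_add_div _ _ (by linarith) hn.ne',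
    div_le_div_iff₀ hn (mul_pos (by linarith) hn)]
  linarith [mul_le_mul_of_nonneg_right h hn.le]

lemma sub_le_add_sum_of_sum_Icc_succ_le {c : ℕ → ℝ} (hk : 2 ≤ k)
    (htail : ∀ j ∈ Ico 1 k,
      ∑ i ∈ Icc (j + 1) k, q i ≤ ((k : ℝ) + 1 - j) * c j + ((k : ℝ) - j) * q j) :
    q k - q 1 ≤ c 1 + ∑ j ∈ Ico 1 k, c j / ((k : ℝ) - j) := by
  have hstart : tailAverage q k 1 ≤ q 1 + c 1 := by
    have h := htail 1 (mem_Ico.2 ⟨le_rfl, hk⟩)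
    refine tailAverage_le_of_sum_le q (by omega) ?_
    rw [sum_Icc_eq_add_sum_Icc_succ q (by omega)]
    simp only [Nat.cast_one, add_sub_cancel_right] at h ⊢
    linarith
  have htel := sum_le_sum fun j hj =>
    sub_le_iff_le_add'.2 (tailAverage_succ_le q (mem_Ico.1 hj).2 (htail j hj))
  rw [sum_Ico_sub _ (by omega), tailAverage_self] at htel
  linarith

end TailAverage

lemma sum_Icc_succ_le_of_pivot_inequalities {k : ℕ} (q β : ℕ → ℝ)
    (h1 : ∀ r, 1 ≤ r → r ≤ k - 2 →
      ∑ i ∈ Icc (r + 2) k, q i ≤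
        ((k : ℝ) - r) / 2 * log ((k : ℝ) - r) -
          ((k : ℝ) - r) * log (β (r + 1)) + ((k : ℝ) - r - 1) * q (r + 1))
    (h2 : ∑ i ∈ Icc 1 k, q i ≤ (k : ℝ) / 2 * log k - (k : ℝ) * log (β 1) + (k : ℝ) * q 1) :
    ∀ j ∈ Ico 1 k, ∑ i ∈ Icc (j + 1) k, q i ≤
      ((k : ℝ) + 1 - j) * (log ((k : ℝ) + 1 - j) / 2 - log (β j)) + ((k : ℝ) - j) * q j := by
  intro j hj
  rw [mem_Ico] at hj
  obtain ⟨r, rfl⟩ : ∃ r, j = r + 1 := ⟨j - 1, by omega⟩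
  push_cast
  rw [show (k : ℝ) + 1 - (r + 1) = k - r by ring]
  rcases Nat.eq_zero_or_pos r with rfl | hr
  · rw [sum_Icc_eq_add_sum_Icc_succ q hj.2.le] at h2
    simp only [Nat.cast_zero, sub_zero, zero_add]
    linarith
  · linarith [h1 r hr (by omega)]

/-- **The key inequality manipulation in Wilkinson's argument with pivoting mistakes.**
Given reals `q_1, …, q_k` and pivot qualities `β_1, …, β_{k-1} ∈ (0,1]` satisfying the
logarithmic pivot inequalities, one has
`q_k - q_1 ≤ log f(k) + (1/2) log k - 2 log β₁ - ∑_{r=1}^{k-2} log β_{r+1} / (k-r-1)`,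
where `f(k) = (∏_{r=2}^k r^{1/(r-1)})^{1/2}`. -/
theorem wilkinson_log_inequality
    (k : ℕ) (hk : 3 ≤ k) (q β : ℕ → ℝ)
    (hβ : ∀ r, 1 ≤ r → r ≤ k - 1 → 0 < β r ∧ β r ≤ 1)
    (h1 : ∀ r, 1 ≤ r → r ≤ k - 2 →
      ∑ i ∈ Finset.Icc (r + 2) k, q i ≤
        ((k : ℝ) - r) / 2 * Real.log ((k : ℝ) - r) -
          ((k : ℝ) - r) * Real.log (β (r + 1)) + ((k : ℝ) - r - 1) * q (r + 1))
    (h2 : ∑ i ∈ Finset.Icc 1 k, q i ≤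
        (k : ℝ) / 2 * Real.log k - (k : ℝ) * Real.log (β 1) + (k : ℝ) * q 1) :
    q k - q 1 ≤
      Real.log ((∏ r ∈ Finset.Icc 2 k, (r : ℝ) ^ (((r : ℝ) - 1)⁻¹)) ^ ((1 : ℝ) / 2)) +
        (1 / 2 : ℝ) * Real.log k - 2 * Real.log (β 1) -
        ∑ r ∈ Finset.Icc 1 (k - 2), Real.log (β (r + 1)) / ((k : ℝ) - r - 1) := by
  have key := sub_le_add_sum_of_sum_Icc_succ_le q (by omega)
    (sum_Icc_succ_le_of_pivot_inequalities q β h1 h2)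
  have hlog : ∑ j ∈ Ico 1 k, log ((k : ℝ) + 1 - j) / 2 / ((k : ℝ) - j) =
      (∑ s ∈ Icc 2 k, log s / ((s : ℝ) - 1)) / 2 := by
    rw [← sum_Ico_one_comp_reflect (fun x => log x / (x - 1)), sum_div]
    exact sum_congr rfl fun j _ => by ring
  have hβsum : ∑ j ∈ Ico 1 k, log (β j) / ((k : ℝ) - j) = log (β 1) / ((k : ℝ) - 1) +
      ∑ r ∈ Icc 1 (k - 2), log (β (r + 1)) / ((k : ℝ) - r - 1) := by
    rw [sum_Ico_one_eq_add_sum_Icc _ (by omega)]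
    simp only [Nat.cast_one, Nat.cast_add, sub_add_eq_sub_sub]
  have hβ1 : -(log (β 1) / ((k : ℝ) - 1)) ≤ -log (β 1) := by
    obtain ⟨hpos, hle⟩ := hβ 1 le_rfl (by omega)
    rw [← neg_div]
    refine div_le_self (neg_nonneg.2 (log_nonpos hpos.le hle)) ?_
    have : (3 : ℝ) ≤ k := by exact_mod_cast hk
    linarith
  simp only [sub_div, sum_sub_distrib, Nat.cast_one, add_sub_cancel_right, hlog, hβsum] at key
  rw [log_prod_rpow_inv_sub_one_rpow_half]
  linarith
end

section
/- For every integer k ≥ 2, Wilkinson's function f(k) = (∏_{r=2}^{k} r^{1/(r−1)})^{1/2} satisfies f(k) ≤ 2 · k^{(1/4)·log k}, where log denotes the natural logarithm. -/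
open Finset Real

/-!
Taking logarithms, the claim is `∑_{r=2}^k log r / (r - 1) ≤ 2 log 2 + (log k)² / 2`.
With `ψ x = (log x)² / 2 - 1 / x`, every term from `r = 3` on telescopes:
`log (n + 1) / n ≤ ψ (n + 1/2) - ψ (n - 1/2)`, because `log (n + 1/2) - log (n - 1/2) ≥ 1 / n`
while `log (n + 1)` exceeds the mean of `log (n ± 1/2)` by at most `1/(2n+1) + 1/(2n-1)`.
Keeping the term `r = 2` aside, the sum is at most `log 2 + 2/3 + ψ (k - 1/2)`, and `2/3 < log 2`.
-/

theorem Real.log_sub_log_le_div {y z : ℝ} (hy : 0 < y) (hz : 0 < z) :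
    log y - log z ≤ (y - z) / z := by
  rw [← log_div hy.ne' hz.ne', sub_div, div_self hz.ne']
  exact log_le_sub_one_of_pos (div_pos hy hz)

theorem Real.two_mul_sub_div_add_le_log_sub_log {y z : ℝ} (hz : 0 < z) (hzy : z ≤ y) :
    2 * (y - z) / (y + z) ≤ log y - log z := by
  have h := le_log_one_add_of_nonneg (div_nonneg (sub_nonneg.2 hzy) hz.le)
  rw [one_add_div hz.ne', add_sub_cancel, log_div (by linarith) hz.ne'] at h
  convert h using 1
  field_simp
  ring

namespace Wilkinson

noncomputable def potential (x : ℝ) : ℝ := log x ^ 2 / 2 - x⁻¹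

theorem log_add_one_div_le_potential_sub {x : ℝ} (hx : 3 / 2 ≤ x) :
    log (x + 1) / x ≤ potential (x + 1 / 2) - potential (x - 1 / 2) := by
  have hA : 0 ≤ log (x + 1 / 2) := log_nonneg (by linarith)
  have hB : 0 ≤ log (x - 1 / 2) := log_nonneg (by linarith)
  have hAB_ge : 1 / x ≤ log (x + 1 / 2) - log (x - 1 / 2) := by
    convert two_mul_sub_div_add_le_log_sub_log (y := x + 1 / 2) (z := x - 1 / 2)
      (by linarith) (by linarith) using 1
    field_simp
    ring
  have hAB_le : log (x + 1 / 2) - log (x - 1 / 2) ≤ 2 / (2 * x - 1) := by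
    convert log_sub_log_le_div (y := x + 1 / 2) (z := x - 1 / 2) (by linarith) (by linarith)
      using 1
    field_simp
    ring
  have hsucc : log (x + 1) - log (x + 1 / 2) ≤ 1 / (2 * x + 1) := by
    convert log_sub_log_le_div (y := x + 1) (z := x + 1 / 2) (by linarith) (by linarith)
      using 1
    field_simp
    ring
  set A := log (x + 1 / 2)
  set B := log (x - 1 / 2)
  -- `1/(2x+1) + 1/(2x-1) = x * ((x - 1/2)⁻¹ - (x + 1/2)⁻¹)` exactly
  calc log (x + 1) / x ≤ ((A + B) / 2 + 1 / (2 * x + 1) + 1 / (2 * x - 1)) / x := by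
        gcongr
        linarith [show 2 / (2 * x - 1) = 2 * (1 / (2 * x - 1)) by ring]
    _ = 1 / x * ((A + B) / 2) + ((x - 1 / 2)⁻¹ - (x + 1 / 2)⁻¹) := by
        have : 2 * x - 1 ≠ 0 := by linarith
        field_simp
        ring
    _ ≤ (A - B) * ((A + B) / 2) + ((x - 1 / 2)⁻¹ - (x + 1 / 2)⁻¹) := by
        gcongr
    _ = potential (x + 1 / 2) - potential (x - 1 / 2) := by
        unfold potential
        ring

theorem sum_log_div_le_potential {k : ℕ} (hk : 2 ≤ k) :
    ∑ r ∈ Icc 2 k, log r / ((r : ℝ) - 1) ≤ log 2 + 2 / 3 + potential (k - 1 / 2) := by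
  induction k, hk using Nat.le_induction with
  | base =>
    norm_num [potential]
    positivity
  | succ n hn ih =>
    rw [sum_Icc_succ_top (by omega)]
    have hn' : (3 / 2 : ℝ) ≤ n := by
      have : (2 : ℝ) ≤ n := by exact_mod_cast hn
      linarith
    have hstep := log_add_one_div_le_potential_sub hn'
    push_cast
    rw [add_sub_cancel_right, show (n : ℝ) + 1 - 1 / 2 = n + 1 / 2 by ring]
    linarith

theorem sum_log_div_le {k : ℕ} (hk : 2 ≤ k) :
    ∑ r ∈ Icc 2 k, log r / ((r : ℝ) - 1) ≤ 2 * log 2 + log k ^ 2 / 2 := by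
  have hk' : (2 : ℝ) ≤ k := by exact_mod_cast hk
  have hlog : log (k - 1 / 2) ≤ log k := log_le_log (by linarith) (by linarith)
  have hlog_nonneg : 0 ≤ log (k - 1 / 2) := log_nonneg (by linarith)
  have hinv : 0 ≤ ((k : ℝ) - 1 / 2)⁻¹ := inv_nonneg.2 (by linarith)
  have hsq : log (k - 1 / 2) ^ 2 ≤ log k ^ 2 := pow_le_pow_left₀ hlog_nonneg hlog 2
  have := sum_log_div_le_potential hk
  unfold potential at this
  linarith [log_two_gt_d9]

end Wilkinson

/-- **Bound on Wilkinson's function.** For every integer `k ≥ 2`,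
`f(k) = (∏_{r=2}^k r^{1/(r-1)})^{1/2} ≤ 2 k^{(1/4) log k}` (natural logarithm). -/
theorem wilkinson_function_bound (k : ℕ) (hk : 2 ≤ k) :
    (∏ r ∈ Finset.Icc 2 k, (r : ℝ) ^ (((r : ℝ) - 1)⁻¹)) ^ ((1 : ℝ) / 2) ≤
      2 * (k : ℝ) ^ ((1 / 4 : ℝ) * Real.log k) := by
  have hr_pos : ∀ r ∈ Icc 2 k, (0 : ℝ) < r := fun r hr ↦
    Nat.cast_pos.2 (by have := (mem_Icc.1 hr).1; omega)
  have hfactor_pos : ∀ r ∈ Icc 2 k, 0 < (r : ℝ) ^ ((r : ℝ) - 1)⁻¹ := fun r hr ↦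
    rpow_pos_of_pos (hr_pos r hr) _
  have hlog_prod : log (∏ r ∈ Icc 2 k, (r : ℝ) ^ ((r : ℝ) - 1)⁻¹) =
      ∑ r ∈ Icc 2 k, log r / ((r : ℝ) - 1) := by
    rw [log_prod fun r hr ↦ (hfactor_pos r hr).ne']
    refine sum_congr rfl fun r hr ↦ ?_
    rw [log_rpow (hr_pos r hr), inv_mul_eq_div]
  have hk_pos : (0 : ℝ) < k := Nat.cast_pos.2 (by omega)
  rw [rpow_le_iff_le_log (prod_pos hfactor_pos) (by positivity), log_mul two_ne_zero
    (by positivity), log_rpow hk_pos, hlog_prod]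
  linarith [Wilkinson.sum_log_div_le hk]
end

section
/- Let n ≥ 2, let β_1,…,β_{n−1} ∈ (0,1], and let A_1 be the n×n real matrix with (A_1)_{st} = 1 if s = t or t = n, (A_1)_{st} = −β_t^{-1} if s > t and t < n, and (A_1)_{st} = 0 otherwise. Perform k GE steps on A_1 (1 ≤ k ≤ n−1) with the diagonal pivots (1,1), (2,2), …, (k,k). Then for all indices s,t > k: A^{(k)}_{st} = ∏_{r=1}^{k} (1 + β_r^{-1}) if t = n, and A^{(k)}_{st} = (A_1)_{st} if t < n; moreover every entry of A^{(k)} in rows 1,…,k or columns 1,…,k is zero. -/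
open Finset Real

/-- Modified Wilkinson matrix `A₁`: `(A₁)_{st} = 1` if `s = t` or `t = n` (1-based),
`(A₁)_{st} = -β_t⁻¹` if `s > t` and `t < n`, and `0` otherwise. Here indices are
0-based, so column `t` (0-based) corresponds to `β (t+1)`. -/
noncomputable def wilkA1 (n : ℕ) (β : ℕ → ℝ) : Matrix (Fin n) (Fin n) ℝ :=
  Matrix.of fun s t =>
    if (s : ℕ) = (t : ℕ) ∨ (t : ℕ) = n - 1 then 1
    else if (t : ℕ) < (s : ℕ) then -(β ((t : ℕ) + 1))⁻¹ else 0

/-- Diagonal pivot positions `(1,1), (2,2), …` (0-based: `(r, r)` at step `r + 1`). -/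
def diagPiv (n : ℕ) (hn : 0 < n) : ℕ → Fin n × Fin n :=
  fun r => (⟨min r (n - 1), by omega⟩, ⟨min r (n - 1), by omega⟩)

/-! By induction on the number of steps, `A^{(j)}` keeps a closed form: its pivot entry
`(j, j)` is `1`, the pivot column below it holds `-β_{j+1}⁻¹`, and the pivot row vanishes except
for the last column. Hence step `j + 1` clears row and column `j`, leaves every other column of the
trailing block unchanged, and multiplies the last column by `1 + β_{j+1}⁻¹`. -/

section GaussianElimination

variable {m n : ℕ} (A : Matrix (Fin m) (Fin n) ℝ) (i : Fin m) (j : Fin n)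

theorem geStep_apply_pivot_row (hij : A i j ≠ 0) (t : Fin n) : geStep A i j i t = 0 := by
  simp [geStep, mul_div_cancel_left₀ _ hij]

theorem geStep_apply_pivot_col (hij : A i j ≠ 0) (s : Fin m) : geStep A i j s j = 0 := by
  simp [geStep, mul_div_cancel_right₀ _ hij]

theorem geStep_apply_of_col_eq_zero {s : Fin m} (hs : A s j = 0) (t : Fin n) :
    geStep A i j s t = A s t := by
  simp [geStep, hs]

theorem geStep_apply_of_row_eq_zero {t : Fin n} (ht : A i t = 0) (s : Fin m) :
    geStep A i j s t = A s t := by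
  simp [geStep, ht]

end GaussianElimination

section WilkinsonStages

variable (n : ℕ) (β : ℕ → ℝ)

/-- `A^{(j)}` for `A = wilkA1 n β` and the diagonal pivots, in closed form. -/
noncomputable def wilkStage (j : ℕ) : Matrix (Fin n) (Fin n) ℝ :=
  Matrix.of fun s t =>
    if (s : ℕ) < j ∨ (t : ℕ) < j then 0
    else if (t : ℕ) = n - 1 then ∏ r ∈ Icc 1 j, (1 + (β r)⁻¹)
    else wilkA1 n β s t

theorem wilkStage_zero : wilkStage n β 0 = wilkA1 n β := by
  ext s t
  by_cases ht : (t : ℕ) = n - 1 <;> simp [wilkStage, wilkA1, ht]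

variable {n} {j : ℕ}

theorem wilkStage_apply_of_lt {s t : Fin n} (h : (s : ℕ) < j ∨ (t : ℕ) < j) :
    wilkStage n β j s t = 0 := by
  simp [wilkStage, h]

theorem wilkStage_apply_of_le {s t : Fin n} (hs : j ≤ s) (ht : j ≤ t) :
    wilkStage n β j s t =
      if (t : ℕ) = n - 1 then ∏ r ∈ Icc 1 j, (1 + (β r)⁻¹) else wilkA1 n β s t := by
  simp only [wilkStage, Matrix.of_apply]
  rw [if_neg (by omega)]

theorem geStep_wilkStage (hj : j < n - 1) :
    geStep (wilkStage n β j) ⟨j, by omega⟩ ⟨j, by omega⟩ = wilkStage n β (j + 1) := by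
  set W := wilkStage n β j
  set p : Fin n := ⟨j, by omega⟩
  have hW_pp : W p p = 1 := by simp [W, wilkStage, wilkA1, p, hj.ne]
  have hpp : W p p ≠ 0 := hW_pp ▸ one_ne_zero
  ext s t
  by_cases hst : (s : ℕ) < j + 1 ∨ (t : ℕ) < j + 1
  · rw [wilkStage_apply_of_lt β hst]
    rcases hst with hs | ht
    · rcases Nat.lt_succ_iff_lt_or_eq.mp hs with hs | hs
      · rw [geStep_apply_of_col_eq_zero _ _ _ (wilkStage_apply_of_lt β (.inl hs)),
          wilkStage_apply_of_lt β (.inl hs)]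
      · obtain rfl : s = p := Fin.ext hs
        exact geStep_apply_pivot_row _ _ _ hpp t
    · rcases Nat.lt_succ_iff_lt_or_eq.mp ht with ht | ht
      · rw [geStep_apply_of_row_eq_zero _ _ _ (wilkStage_apply_of_lt β (.inr ht)),
          wilkStage_apply_of_lt β (.inr ht)]
      · obtain rfl : t = p := Fin.ext ht
        exact geStep_apply_pivot_col _ _ _ hpp s
  · push Not at hst
    obtain ⟨hs, ht⟩ := hst
    have hW_sp : W s p = -(β (j + 1))⁻¹ := by
      simp only [W, wilkStage, wilkA1, Matrix.of_apply, p]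
      rw [if_neg (by omega), if_neg (by omega), if_neg (by omega), if_pos (by omega)]
    have hW_pt : W p t = if (t : ℕ) = n - 1 then ∏ r ∈ Icc 1 j, (1 + (β r)⁻¹) else 0 := by
      simp only [W, wilkStage, wilkA1, Matrix.of_apply, p]
      rw [if_neg (by omega)]
      split_ifs <;> first | rfl | omega
    rw [wilkStage_apply_of_le β hs ht]
    have hW_st : W s t = _ := wilkStage_apply_of_le β (Nat.le_of_lt hs) (Nat.le_of_lt ht)
    simp only [geStep, Matrix.of_apply, hW_pp, hW_sp, hW_pt, hW_st]
    split_ifs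
    · rw [prod_Icc_succ_top (by omega)]
      ring
    · ring

theorem diagPiv_apply_of_le {n : ℕ} (hn : 0 < n) {r : ℕ} (hr : r ≤ n - 1) :
    diagPiv n hn r = (⟨r, by omega⟩, ⟨r, by omega⟩) := by
  simp [diagPiv, hr]

theorem geIter_wilkA1_diagPiv (hn : 0 < n) (hj : j ≤ n - 1) :
    geIter (wilkA1 n β) (diagPiv n hn) j = wilkStage n β j := by
  induction j with
  | zero => exact (wilkStage_zero n β).symm
  | succ j ih =>
    rw [geIter, ih (by omega), diagPiv_apply_of_le hn (by omega), geStep_wilkStage β (by omega)]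

end WilkinsonStages

/-- **GE with partial pivoting on `A₁`: explicit form of the intermediate matrices.**
After `k` diagonal-pivot GE steps (1-based pivots `(1,1), …, (k,k)`), for all 0-based
indices `s, t ≥ k` the entry `A^{(k)}_{st}` equals `∏_{r=1}^k (1 + β_r⁻¹)` in the last
column and equals the original entry `(A₁)_{st}` in the other columns; entries in the
first `k` rows or columns are zero. -/
theorem wilkA1_ge_intermediate
    (n : ℕ) (hn : 2 ≤ n) (β : ℕ → ℝ)
    (k : ℕ) (hk2 : k ≤ n - 1) :
    (∀ s t : Fin n, k ≤ (s : ℕ) → k ≤ (t : ℕ) →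
      (((t : ℕ) = n - 1 →
          geIter (wilkA1 n β) (diagPiv n (by omega)) k s t =
            ∏ r ∈ Finset.Icc 1 k, (1 + (β r)⁻¹)) ∧
        ((t : ℕ) < n - 1 →
          geIter (wilkA1 n β) (diagPiv n (by omega)) k s t = wilkA1 n β s t))) ∧
      (∀ s t : Fin n, (s : ℕ) < k ∨ (t : ℕ) < k →
        geIter (wilkA1 n β) (diagPiv n (by omega)) k s t = 0) := by
  rw [geIter_wilkA1_diagPiv β _ hk2]
  refine ⟨fun s t hs ht => ⟨fun htn => ?_, fun htn => ?_⟩, fun s t h => wilkStage_apply_of_lt β h⟩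
  · rw [wilkStage_apply_of_le β hs ht, if_pos htn]
  · rw [wilkStage_apply_of_le β hs ht, if_neg htn.ne]
end
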